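/- Let n ≥ 3 and define G : ℕ → ℕ by G(x) = mex {G(x-s) : s ∈ {2, 4n, 4n+2}, s ≤ x}. Then G satisfies the reverse-mex property: for every x ∈ ℕ, G(x) = mex {G(x+2), G(x+4n), G(x+4n+2)}. -/
import Mathlib


noncomputable def mex (T : Set ℕ) : ℕ := sInf {k : ℕ | k ∉ T}

def subRec (n : ℕ) (G : ℕ → ℕ) : Prop :=
  ∀ x : ℕ, G x = mex {y : ℕ | ∃ s ∈ ({2, 4*n, 4*n+2} : Set ℕ), s ≤ x ∧ y = G (x - s)}

def passRec (n : ℕ) (G0 G1 : ℕ → ℕ) : Prop :=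
  G1 0 = 0 ∧ G1 1 = 0 ∧
  ∀ x : ℕ, 2 ≤ x →
    G1 x = mex ({y : ℕ | ∃ s ∈ ({2, 4*n, 4*n+2} : Set ℕ), s ≤ x ∧ y = G1 (x - s)} ∪ {G0 x})

lemma mex_eq_of {T : Set ℕ} {m : ℕ} (h1 : m ∉ T) (h2 : ∀ k < m, k ∈ T) : mex T = m := by
  unfold mex
  have hmem : m ∈ {k : ℕ | k ∉ T} := h1
  refine le_antisymm (Nat.sInf_le hmem) ?_
  by_contra h
  push_neg at h
  have h3 : sInf {k : ℕ | k ∉ T} ∈ {k : ℕ | k ∉ T} := Nat.sInf_mem ⟨m, hmem⟩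
  exact h3 (h2 _ h)

lemma mex0 : mex (∅ : Set ℕ) = 0 :=
  mex_eq_of (by simp) (by intro k hk; omega)

lemma mex1 {a m : ℕ} (h1 : m ≠ a) (h2 : ∀ k < m, k = a) : mex {a} = m :=
  mex_eq_of (by simpa using h1) (by intro k hk; simpa using h2 k hk)

lemma mex2 {a b m : ℕ} (h1 : m ≠ a) (h2 : m ≠ b) (h4 : ∀ k < m, k = a ∨ k = b) :
    mex {a, b} = m := by
  refine mex_eq_of ?_ ?_
  · simp only [Set.mem_insert_iff, Set.mem_singleton_iff]; tauto
  · intro k hk; simp only [Set.mem_insert_iff, Set.mem_singleton_iff]; exact h4 k hk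

lemma mex3 {a b c m : ℕ} (h1 : m ≠ a) (h2 : m ≠ b) (h3 : m ≠ c)
    (h4 : ∀ k < m, k = a ∨ k = b ∨ k = c) : mex {a, b, c} = m := by
  refine mex_eq_of ?_ ?_
  · simp only [Set.mem_insert_iff, Set.mem_singleton_iff]; tauto
  · intro k hk; simp only [Set.mem_insert_iff, Set.mem_singleton_iff]; exact h4 k hk

def f (n x : ℕ) : ℕ := (if x % (8*n) < 4*n then 0 else 2) + (if x % 4 < 2 then 0 else 1)

lemma f_val (n q r : ℕ) (hr : r < 8*n) :
    f n (8*n*q + r) = (if r < 4*n then 0 else 2) + (if r % 4 < 2 then 0 else 1) := by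
  have h1 : (8*n*q + r) % (8*n) = r := by
    rw [Nat.mul_add_mod]; exact Nat.mod_eq_of_lt hr
  have h2 : (8*n*q + r) % 4 = r % 4 := by
    have h : 8*n*q + r = r + 4*(2*(n*q)) := by ring
    rw [h, Nat.add_mul_mod_self_left]
  simp only [f, h1, h2]

lemma f_val0 (n r : ℕ) (hr : r < 8*n) :
    f n r = (if r < 4*n then 0 else 2) + (if r % 4 < 2 then 0 else 1) := by
  have := f_val n 0 r hr
  simpa using this

section SetLemmas
variable {n x : ℕ} (G : ℕ → ℕ)

lemma setA (hn : 3 ≤ n) (hx : x < 2) :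
    {y : ℕ | ∃ s ∈ ({2, 4*n, 4*n+2} : Set ℕ), s ≤ x ∧ y = G (x - s)} = ∅ := by
  ext y
  simp only [Set.mem_setOf_eq, Set.mem_empty_iff_false, iff_false, not_exists]
  rintro s ⟨hs, hle, -⟩
  simp only [Set.mem_insert_iff, Set.mem_singleton_iff] at hs
  rcases hs with rfl | rfl | rfl <;> omega

lemma setB (hn : 3 ≤ n) (hx1 : 2 ≤ x) (hx2 : x < 4*n) :
    {y : ℕ | ∃ s ∈ ({2, 4*n, 4*n+2} : Set ℕ), s ≤ x ∧ y = G (x - s)} = {G (x - 2)} := by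
  ext y
  simp only [Set.mem_setOf_eq, Set.mem_singleton_iff]
  constructor
  · rintro ⟨s, hs, hle, rfl⟩
    simp only [Set.mem_insert_iff, Set.mem_singleton_iff] at hs
    rcases hs with rfl | rfl | rfl
    · rfl
    · omega
    · omega
  · rintro rfl
    exact ⟨2, by simp, hx1, rfl⟩

lemma setC (hn : 3 ≤ n) (hx1 : 4*n ≤ x) (hx2 : x < 4*n+2) :
    {y : ℕ | ∃ s ∈ ({2, 4*n, 4*n+2} : Set ℕ), s ≤ x ∧ y = G (x - s)}
      = {G (x - 2), G (x - 4*n)} := by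
  ext y
  simp only [Set.mem_setOf_eq, Set.mem_insert_iff, Set.mem_singleton_iff]
  constructor
  · rintro ⟨s, hs, hle, rfl⟩
    rcases hs with rfl | rfl | rfl
    · exact Or.inl rfl
    · exact Or.inr rfl
    · omega
  · rintro (rfl | rfl)
    · exact ⟨2, by simp, by omega, rfl⟩
    · exact ⟨4*n, by simp, hx1, rfl⟩

lemma setD (hn : 3 ≤ n) (hx : 4*n+2 ≤ x) :
    {y : ℕ | ∃ s ∈ ({2, 4*n, 4*n+2} : Set ℕ), s ≤ x ∧ y = G (x - s)}
      = {G (x - 2), G (x - 4*n), G (x - (4*n+2))} := by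
  ext y
  simp only [Set.mem_setOf_eq, Set.mem_insert_iff, Set.mem_singleton_iff]
  constructor
  · rintro ⟨s, hs, hle, rfl⟩
    rcases hs with rfl | rfl | rfl
    · exact Or.inl rfl
    · exact Or.inr (Or.inl rfl)
    · exact Or.inr (Or.inr rfl)
  · rintro (rfl | rfl | rfl)
    · exact ⟨2, by simp, by omega, rfl⟩
    · exact ⟨4*n, by simp, by omega, rfl⟩
    · exact ⟨4*n+2, by simp, hx, rfl⟩

end SetLemmas

set_option maxHeartbeats 2000000 in
lemma G_eq_f (n : ℕ) (hn : 3 ≤ n) (G : ℕ → ℕ) (hG : subRec n G) : ∀ x, G x = f n x := by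
  intro x
  induction x using Nat.strong_induction_on with
  | _ x ih =>
  obtain ⟨q, r, hr, rfl⟩ : ∃ q r, r < 8*n ∧ x = 8*n*q + r :=
    ⟨x / (8*n), x % (8*n), Nat.mod_lt _ (by omega), (Nat.div_add_mod x (8*n)).symm⟩
  rw [hG (8*n*q + r)]
  by_cases hbig : 4*n+2 ≤ r
  · -- generic case: no boundary crossing
    have e2 : 8*n*q + r - 2 = 8*n*q + (r-2) := by omega
    have e4 : 8*n*q + r - 4*n = 8*n*q + (r-4*n) := by omega
    have e6 : 8*n*q + r - (4*n+2) = 8*n*q + (r-(4*n+2)) := by omega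
    rw [setD G hn (by omega), e2, e4, e6,
      ih _ (by omega), ih _ (by omega), ih _ (by omega),
      f_val n q (r-2) (by omega), f_val n q (r-4*n) (by omega),
      f_val n q (r-(4*n+2)) (by omega), f_val n q r hr]
    refine mex3 ?_ ?_ ?_ ?_
    · split_ifs <;> omega
    · split_ifs <;> omega
    · split_ifs <;> omega
    · intro k hk; split_ifs at hk ⊢ <;> omega
  · rcases q with _ | q'
    · -- q = 0
      have hx0 : 8*n*0 + r = r := by ring
      rw [hx0]
      by_cases h2 : r < 2
      · rw [setA G hn h2, mex0, f_val0 n r hr]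
        split_ifs <;> omega
      · by_cases h4 : r < 4*n
        · rw [setB G hn (by omega) h4, ih _ (by omega),
            f_val0 n (r-2) (by omega), f_val0 n r hr]
          refine mex1 ?_ ?_
          · split_ifs <;> omega
          · intro k hk; split_ifs at hk ⊢ <;> omega
        · rw [setC G hn (by omega) (by omega), ih _ (by omega), ih _ (by omega),
            f_val0 n (r-2) (by omega), f_val0 n (r-4*n) (by omega), f_val0 n r hr]
          refine mex2 ?_ ?_ ?_
          · split_ifs <;> omega
          · split_ifs <;> omega
          · intro k hk; split_ifs at hk ⊢ <;> omega
    · -- q = q' + 1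
      have k8 : 8*n*(q'+1) = 8*n*q' + 8*n := by ring
      have hx : 4*n+2 ≤ 8*n*(q'+1) + r := by omega
      rw [setD G hn hx]
      by_cases h2 : r < 2
      · have e2 : 8*n*(q'+1) + r - 2 = 8*n*q' + (8*n + r - 2) := by omega
        have e4 : 8*n*(q'+1) + r - 4*n = 8*n*q' + (4*n + r) := by omega
        have e6 : 8*n*(q'+1) + r - (4*n+2) = 8*n*q' + (4*n + r - 2) := by omega
        rw [e2, e4, e6, ih _ (by omega), ih _ (by omega), ih _ (by omega),
          f_val n q' (8*n+r-2) (by omega), f_val n q' (4*n+r) (by omega),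
          f_val n q' (4*n+r-2) (by omega), f_val n (q'+1) r hr]
        refine mex3 ?_ ?_ ?_ ?_
        · split_ifs <;> omega
        · split_ifs <;> omega
        · split_ifs <;> omega
        · intro k hk; split_ifs at hk ⊢ <;> omega
      · by_cases h4 : r < 4*n
        · have e2 : 8*n*(q'+1) + r - 2 = 8*n*(q'+1) + (r-2) := by omega
          have e4 : 8*n*(q'+1) + r - 4*n = 8*n*q' + (4*n + r) := by omega
          have e6 : 8*n*(q'+1) + r - (4*n+2) = 8*n*q' + (4*n + r - 2) := by omega
          rw [e2, e4, e6, ih _ (by omega), ih _ (by omega), ih _ (by omega),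
            f_val n (q'+1) (r-2) (by omega), f_val n q' (4*n+r) (by omega),
            f_val n q' (4*n+r-2) (by omega), f_val n (q'+1) r hr]
          refine mex3 ?_ ?_ ?_ ?_
          · split_ifs <;> omega
          · split_ifs <;> omega
          · split_ifs <;> omega
          · intro k hk; split_ifs at hk ⊢ <;> omega
        · -- 4*n ≤ r < 4*n+2
          have e2 : 8*n*(q'+1) + r - 2 = 8*n*(q'+1) + (r-2) := by omega
          have e4 : 8*n*(q'+1) + r - 4*n = 8*n*(q'+1) + (r-4*n) := by omega
          have e6 : 8*n*(q'+1) + r - (4*n+2) = 8*n*q' + (4*n + r - 2) := by omega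
          rw [e2, e4, e6, ih _ (by omega), ih _ (by omega), ih _ (by omega),
            f_val n (q'+1) (r-2) (by omega), f_val n (q'+1) (r-4*n) (by omega),
            f_val n q' (4*n+r-2) (by omega), f_val n (q'+1) r hr]
          refine mex3 ?_ ?_ ?_ ?_
          · split_ifs <;> omega
          · split_ifs <;> omega
          · split_ifs <;> omega
          · intro k hk; split_ifs at hk ⊢ <;> omega

set_option maxHeartbeats 2000000 in
theorem stmt (n : ℕ) (hn : 3 ≤ n) (G : ℕ → ℕ) (hG : subRec n G) :
    ∀ x : ℕ, G x = mex {G (x+2), G (x+4*n), G (x+4*n+2)} := by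
  intro x
  have hf := G_eq_f n hn G hG
  rw [hf x, hf (x+2), hf (x+4*n), hf (x+4*n+2)]
  obtain ⟨q, r, hr, rfl⟩ : ∃ q r, r < 8*n ∧ x = 8*n*q + r :=
    ⟨x / (8*n), x % (8*n), Nat.mod_lt _ (by omega), (Nat.div_add_mod x (8*n)).symm⟩
  have k8 : 8*n*(q+1) = 8*n*q + 8*n := by ring
  symm
  by_cases hA : r < 4*n-2
  · have e2 : 8*n*q + r + 2 = 8*n*q + (r+2) := by omega
    have e4 : 8*n*q + r + 4*n = 8*n*q + (r+4*n) := by omega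
    have e6 : 8*n*q + r + 4*n + 2 = 8*n*q + (r+4*n+2) := by omega
    rw [e6, e4, e2, f_val n q (r+2) (by omega), f_val n q (r+4*n) (by omega),
      f_val n q (r+4*n+2) (by omega), f_val n q r hr]
    refine mex3 ?_ ?_ ?_ ?_
    · split_ifs <;> omega
    · split_ifs <;> omega
    · split_ifs <;> omega
    · intro k hk; split_ifs at hk ⊢ <;> omega
  · by_cases hB : r < 4*n
    · have e2 : 8*n*q + r + 2 = 8*n*q + (r+2) := by omega
      have e4 : 8*n*q + r + 4*n = 8*n*q + (r+4*n) := by omega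
      have e6 : 8*n*q + r + 4*n + 2 = 8*n*(q+1) + (r+4*n+2-8*n) := by omega
      rw [e6, e4, e2, f_val n q (r+2) (by omega), f_val n q (r+4*n) (by omega),
        f_val n (q+1) (r+4*n+2-8*n) (by omega), f_val n q r hr]
      refine mex3 ?_ ?_ ?_ ?_
      · split_ifs <;> omega
      · split_ifs <;> omega
      · split_ifs <;> omega
      · intro k hk; split_ifs at hk ⊢ <;> omega
    · by_cases hC : r < 8*n-2
      · have e2 : 8*n*q + r + 2 = 8*n*q + (r+2) := by omega
        have e4 : 8*n*q + r + 4*n = 8*n*(q+1) + (r-4*n) := by omega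
        have e6 : 8*n*q + r + 4*n + 2 = 8*n*(q+1) + (r-4*n+2) := by omega
        rw [e6, e4, e2, f_val n q (r+2) (by omega), f_val n (q+1) (r-4*n) (by omega),
          f_val n (q+1) (r-4*n+2) (by omega), f_val n q r hr]
        refine mex3 ?_ ?_ ?_ ?_
        · split_ifs <;> omega
        · split_ifs <;> omega
        · split_ifs <;> omega
        · intro k hk; split_ifs at hk ⊢ <;> omega
      · have e2 : 8*n*q + r + 2 = 8*n*(q+1) + (r+2-8*n) := by omega
        have e4 : 8*n*q + r + 4*n = 8*n*(q+1) + (r-4*n) := by omega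
        have e6 : 8*n*q + r + 4*n + 2 = 8*n*(q+1) + (r-4*n+2) := by omega
        rw [e6, e4, e2, f_val n (q+1) (r+2-8*n) (by omega), f_val n (q+1) (r-4*n) (by omega),
          f_val n (q+1) (r-4*n+2) (by omega), f_val n q r hr]
        refine mex3 ?_ ?_ ?_ ?_
        · split_ifs <;> omega
        · split_ifs <;> omega
        · split_ifs <;> omega
        · intro k hk; split_ifs at hk ⊢ <;> omega
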